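/- arXiv:1310.3520 — 5 statements merged into one kernel-verified Lean document; each statement's English description precedes it below -/
import Mathlib

section
/- Let B = [[b11, B12],[B21, B22]] be an m×n real matrix with m, n ≥ 1 (so B22 is (m-1)×(n-1)), and let a, c be nonzero real numbers. Then the (m+1)×(n+1) block matrix [[0, a, 0],[c, b11, B12],[0, B21, B22]] has rank equal to rank(B22) + 2. -/
/-!
Regroup the indices as `(first row/column, pivot row/column) ⊕ rest`. The top-left `2 × 2` block
`A = [[0, a], [c, b11]]` is invertible since `a c ≠ 0`, so by the Schur complement factorisation
the rank is `rank A + rank (B22 - [0 B21] A⁻¹ [0; B12])`. The bottom-right entry of `A⁻¹` is `0`,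
hence the correction term vanishes and the rank is `2 + rank B22`.
-/

open Matrix Module

theorem Submodule.finrank_prod {K M N : Type*} [DivisionRing K] [AddCommGroup M] [AddCommGroup N]
    [Module K M] [Module K N] [FiniteDimensional K M] [FiniteDimensional K N]
    (p : Submodule K M) (q : Submodule K N) :
    finrank K (p.prod q) = finrank K p + finrank K q := by
  have hrange : LinearMap.range (p.subtype.prodMap q.subtype) = p.prod q := by
    rw [LinearMap.range_prodMap, Submodule.range_subtype, Submodule.range_subtype]
  rw [← hrange, LinearMap.finrank_range_of_inj, Module.finrank_prod]
  exact Prod.map_injective.2 ⟨p.injective_subtype, q.injective_subtype⟩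

namespace Matrix

section Regroup

variable {R l₁ l₂ l₃ n₁ n₂ n₃ : Type*}

theorem reindex_sumAssoc_fromBlocks (A₁₁ : Matrix l₁ n₁ R) (A₁₂ : Matrix l₁ n₂ R)
    (A₁₃ : Matrix l₁ n₃ R) (A₂₁ : Matrix l₂ n₁ R) (A₂₂ : Matrix l₂ n₂ R) (A₂₃ : Matrix l₂ n₃ R)
    (A₃₁ : Matrix l₃ n₁ R) (A₃₂ : Matrix l₃ n₂ R) (A₃₃ : Matrix l₃ n₃ R) :
    reindex (Equiv.sumAssoc l₁ l₂ l₃) (Equiv.sumAssoc n₁ n₂ n₃)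
        (fromBlocks (fromBlocks A₁₁ A₁₂ A₂₁ A₂₂) (fromRows A₁₃ A₂₃) (fromCols A₃₁ A₃₂) A₃₃) =
      fromBlocks A₁₁ (fromCols A₁₂ A₁₃) (fromRows A₂₁ A₃₁) (fromBlocks A₂₂ A₂₃ A₃₂ A₃₃) := by
  ext (i | i | i) (j | j | j) <;> rfl

end Regroup

variable {K l m n o p : Type*} [Field K] [Fintype l] [Fintype m] [Fintype n] [Fintype o]
  [Fintype p]

theorem rank_fromBlocks_zero_zero (A : Matrix m n K) (D : Matrix o p K) :
    (fromBlocks A 0 0 D).rank = A.rank + D.rank := by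
  have hmulVecLin : (fromBlocks A 0 0 D).mulVecLin =
      (LinearEquiv.sumArrowLequivProdArrow m o K K).symm.toLinearMap ∘ₗ
        (A.mulVecLin.prodMap D.mulVecLin) ∘ₗ
          (LinearEquiv.sumArrowLequivProdArrow n p K K).toLinearMap := by
    ext x (i | i) <;> simp [fromBlocks_mulVec, LinearEquiv.sumArrowLequivProdArrow,
      Equiv.sumArrowEquivProdArrow]
  rw [rank, hmulVecLin, LinearMap.range_comp, LinearMap.range_comp_of_range_eq_top _
    (LinearEquiv.range _), LinearEquiv.finrank_map_eq, LinearMap.range_prodMap,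
    Submodule.finrank_prod, rank, rank]

theorem rank_fromBlocks_of_invertible₁₁ [DecidableEq m] (A : Matrix m m K)
    (B : Matrix m n K) (C : Matrix l m K) (D : Matrix l n K) [Invertible A] :
    (fromBlocks A B C D).rank = A.rank + (D - C * ⅟A * B).rank := by
  classical
  rw [fromBlocks_eq_of_invertible₁₁, rank_mul_eq_left_of_isUnit_det,
    rank_mul_eq_right_of_isUnit_det, rank_fromBlocks_zero_zero] <;> simp

end Matrix

/-- Bordering `B = [[b11, B12],[B21, B22]]` with a new first row `(0, a, 0)` and a new
first column `(0, c, 0)ᵀ`, with `a, c ≠ 0`, gives a matrix of rank `rank B22 + 2`. -/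
theorem rank_bordered_eq (m' n' : ℕ) (b11 : ℝ)
    (B12 : Matrix (Fin 1) (Fin n') ℝ) (B21 : Matrix (Fin m') (Fin 1) ℝ)
    (B22 : Matrix (Fin m') (Fin n') ℝ) (a c : ℝ) (ha : a ≠ 0) (hc : c ≠ 0) :
    (Matrix.fromBlocks (0 : Matrix (Fin 1) (Fin 1) ℝ)
        (Matrix.fromCols (Matrix.of fun _ _ => a) (0 : Matrix (Fin 1) (Fin n') ℝ))
        (Matrix.fromRows (Matrix.of fun _ _ => c) (0 : Matrix (Fin m') (Fin 1) ℝ))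
        (Matrix.fromBlocks (Matrix.of fun _ _ => b11) B12 B21 B22)).rank =
      B22.rank + 2 := by
  let A : Matrix (Fin 1 ⊕ Fin 1) (Fin 1 ⊕ Fin 1) ℝ :=
    fromBlocks 0 (of fun _ _ => a) (of fun _ _ => c) (of fun _ _ => b11)
  let Ainv : Matrix (Fin 1 ⊕ Fin 1) (Fin 1 ⊕ Fin 1) ℝ :=
    fromBlocks (of fun _ _ => -b11 / (a * c)) (of fun _ _ => c⁻¹) (of fun _ _ => a⁻¹) 0
  let : Invertible A := by
    refine ⟨Ainv, ?_, ?_⟩ <;> ext (i | i) (j | j) <;>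
      simp [A, Ainv, mul_apply, one_apply, Subsingleton.elim i j] <;> field_simp <;> ring
  have hschur : fromCols (0 : Matrix (Fin m') (Fin 1) ℝ) B21 * ⅟A *
      fromRows (0 : Matrix (Fin 1) (Fin n') ℝ) B12 = 0 := by
    rw [show ⅟A = Ainv from rfl]
    simp [Ainv, fromCols_mul_fromBlocks, fromCols_mul_fromRows]
  rw [← reindex_sumAssoc_fromBlocks, rank_reindex, rank_fromBlocks_of_invertible₁₁, hschur,
    sub_zero, rank_of_isUnit A (isUnit_of_invertible A), add_comm]
  simp
end

section
/- Let A = [[A11, A12],[A21, A22]] be a real block matrix where A11 is m1×n1, A12 is m1×n2, A21 is m2×n1, A22 is m2×n2. If x is a vector with A22^T x = 0 and y is a vector with A22 y = 0, then the block matrix [[0, x^T A21, 0],[A12 y, A11, A12],[0, A21, A22]] has the same rank as A. -/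
/-!
Put `u = (0, xᵀ)` and `v = (0, y)ᵀ`. Since `xᵀ A22 = 0` and `A22 y = 0`, the bordered matrix is
`[[0, u A], [A v, A]]`, and `u A v = 0`. Hence it equals
`[[1, u], [0, 1]] * [[0, 0], [0, A]] * [[1, 0], [v, 1]]`, a product of `diag(0, A)` with
unitriangular matrices, so it has the rank of `A`.
-/

namespace Matrix

variable {R : Type*} [CommRing R] {l k m n : Type*} [Fintype k] [Fintype m] [Fintype n]

theorem rank_fromBlocks_zero_zero_zero [StrongRankCondition R] (A : Matrix m n R) :
    (fromBlocks (0 : Matrix l k R) 0 0 A).rank = A.rank := by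
  classical
  have hfactor : fromBlocks (0 : Matrix l k R) 0 0 A =
      fromRows (0 : Matrix l m R) 1 * A * fromCols (0 : Matrix n k R) 1 := by
    rw [fromRows_mul, fromRows_mul_fromCols]
    simp
  refine le_antisymm ?_ ?_
  · rw [hfactor]
    exact (rank_mul_le_left _ _).trans (rank_mul_le_right _ _)
  · exact rank_submatrix_le (fromBlocks (0 : Matrix l k R) 0 0 A) Sum.inr Sum.inr

theorem rank_fromBlocks_zero_mul_mul_of_mul_mul_eq_zero [StrongRankCondition R] [Fintype l]
    [DecidableEq l] [DecidableEq k] [DecidableEq m] [DecidableEq n] (A : Matrix m n R) (u : Matrix l m R) (v : Matrix n k R)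
    (huAv : u * A * v = 0) :
    (fromBlocks 0 (u * A) (A * v) A).rank = A.rank := by
  have hfactor : fromBlocks 0 (u * A) (A * v) A =
      (fromBlocks 1 u 0 1 : Matrix (l ⊕ m) (l ⊕ m) R) * fromBlocks (0 : Matrix l k R) 0 0 A *
        (fromBlocks 1 0 v 1 : Matrix (k ⊕ n) (k ⊕ n) R) := by
    simp [fromBlocks_multiply, huAv]
  rw [hfactor, rank_mul_eq_left_of_isUnit_det _ _ (by simp),
    rank_mul_eq_right_of_isUnit_det _ _ (by simp),
    rank_fromBlocks_zero_zero_zero]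

end Matrix

open Matrix

/-- If `A22ᵀ x = 0` and `A22 y = 0`, then bordering `A = [[A11, A12],[A21, A22]]` with
first row `(0, xᵀ A21, 0)` and first column `(0, A12 y, 0)ᵀ` does not change the rank. -/
theorem rank_adjoin_eq (m1 n1 m2 n2 : ℕ)
    (A11 : Matrix (Fin m1) (Fin n1) ℝ) (A12 : Matrix (Fin m1) (Fin n2) ℝ)
    (A21 : Matrix (Fin m2) (Fin n1) ℝ) (A22 : Matrix (Fin m2) (Fin n2) ℝ)
    (x : Fin m2 → ℝ) (y : Fin n2 → ℝ)
    (hx : Matrix.mulVec (Matrix.transpose A22) x = 0) (hy : Matrix.mulVec A22 y = 0) :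
    (Matrix.fromBlocks (0 : Matrix (Fin 1) (Fin 1) ℝ)
        (Matrix.fromCols (Matrix.of fun (_ : Fin 1) j => Matrix.vecMul x A21 j)
          (0 : Matrix (Fin 1) (Fin n2) ℝ))
        (Matrix.fromRows (Matrix.of fun i (_ : Fin 1) => Matrix.mulVec A12 y i)
          (0 : Matrix (Fin m2) (Fin 1) ℝ))
        (Matrix.fromBlocks A11 A12 A21 A22)).rank =
      (Matrix.fromBlocks A11 A12 A21 A22).rank := by
  set A := fromBlocks A11 A12 A21 A22
  set u := fromCols (0 : Matrix (Fin 1) (Fin m1) ℝ) (replicateRow (Fin 1) x)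
  set v := fromRows (0 : Matrix (Fin n1) (Fin 1) ℝ) (replicateCol (Fin 1) y)
  have huA : u * A = fromCols (replicateRow (Fin 1) (x ᵥ* A21)) 0 := by
    rw [fromCols_mul_fromBlocks, ← replicateRow_vecMul, ← replicateRow_vecMul,
      ← mulVec_transpose A22, hx]
    simp
  have hAv : A * v = fromRows (replicateCol (Fin 1) (A12 *ᵥ y)) 0 := by
    rw [fromBlocks_mul_fromRows, ← replicateCol_mulVec, ← replicateCol_mulVec, hy]
    simp
  have huAv : u * A * v = 0 := by
    rw [huA, fromCols_mul_fromRows]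
    simp
  have := rank_fromBlocks_zero_mul_mul_of_mul_mul_eq_zero A u v huAv
  rwa [huA, hAv] at this
end

section
/- Let A = [[A11, A12, 0],[A21, a22, A23],[0, A32, A33]] be a real matrix with a 1-separation (A11 is m1×n1, A33 is m2×n2, a22 a scalar, A12 an m1×1 column, A21 a 1×n1 row, A23 a 1×n2 row, A32 an m2×1 column). Then at least one of the following holds: (i) there exist v ∈ R^{m1} and z ∈ R^{n1} such that rank(A) = rank([[A11, A12],[A21, v^T A11 z]]) + rank([[a22 − v^T A11 z, A23],[A32, A33]]); (ii) rank(A) = rank([A11; A21]) + rank([A23; A33]) + 1; (iii) rank(A) = rank([A11 A12]) + rank([A32 A33]) + 1; (iv) rank(A) = rank(A11) + rank(A33) + 2. -/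
/-!
Say `A12 = A11 z` is solvable (`A12` lies in the column space of `A11`), and likewise ask whether
`A21 = vᵀ A11` and `A32 = A33 y` are solvable. If the first two are, eliminating with the pivot
`A11` leaves its generalized Schur complement: this is (i). Otherwise read the rank off the
three column blocks of `A`. If `A12` or `A32` lies outside the column space of its neighbour and
`ker A11 ⊆ ker A21` (or `ker A33 ⊆ ker A23`), the outer blocks span independent subspaces and
the middle column adds one more dimension: this is (ii). If both kernel inclusions fail, the
middle unit vector lies in the column space of `A`; splitting it off leaves the same shape with
zero middle row, to which (ii) applies and gives (iv). Finally, if `A12` and `A32` both lie in the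
column spaces but `A21` is not a combination of the rows of `A11`, the transpose of `A` falls
under (ii): that is (iii).
-/

open Matrix Module Submodule

theorem Submodule.finrank_sup_of_disjoint {K V : Type*} [DivisionRing K] [AddCommGroup V]
    [Module K V] {U W : Submodule K V} [FiniteDimensional K U] [FiniteDimensional K W]
    (h : Disjoint U W) : finrank K ↥(U ⊔ W) = finrank K U + finrank K W := by
  rw [← finrank_sup_add_finrank_inf_eq, h.eq_bot, finrank_bot, add_zero]

namespace Matrix

section CommSemiring

variable {R : Type*} [CommSemiring R] {m n n₁ n₂ : Type*}

theorem range_mulVecLin_fromCols [Fintype n₁] [Fintype n₂] (X : Matrix m n₁ R)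
    (Y : Matrix m n₂ R) :
    LinearMap.range (fromCols X Y).mulVecLin =
      LinearMap.range X.mulVecLin ⊔ LinearMap.range Y.mulVecLin := by
  have hcol : (fromCols X Y).col = Sum.elim X.col Y.col := by ext (j | j) <;> rfl
  rw [range_mulVecLin, range_mulVecLin, range_mulVecLin, hcol, Set.Sum.elim_range, span_union]

theorem exists_replicateRow_mul_eq_iff {ι : Type*} [Fintype m] {A : Matrix m n R}
    {B : Matrix ι n R} :
    (∃ v : m → R, replicateRow ι v * A = B) ↔
      ∃ v : m → R, Aᵀ * replicateCol ι v = Bᵀ := by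
  simp only [← transpose_replicateRow, ← transpose_mul, transpose_inj]

theorem ker_mulVecLin_transpose_le_of_mul_eq {p : Type*} [Fintype m] [Fintype n]
    {A : Matrix m n R} {Z : Matrix n p R} {C : Matrix m p R} (h : A * Z = C) :
    LinearMap.ker Aᵀ.mulVecLin ≤ LinearMap.ker Cᵀ.mulVecLin := by
  rw [← h, transpose_mul, mulVecLin_mul]
  exact LinearMap.ker_le_ker_comp _ _

end CommSemiring

variable {K : Type*} [Field K] {m m₁ m₂ n n₁ n₂ : Type*}

theorem rank_fromCols_of_disjoint [Fintype n₁] [Fintype n₂] {X : Matrix m n₁ K}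
    {Y : Matrix m n₂ K}
    (h : Disjoint (LinearMap.range X.mulVecLin) (LinearMap.range Y.mulVecLin)) :
    (fromCols X Y).rank = X.rank + Y.rank := by
  rw [rank, range_mulVecLin_fromCols, finrank_sup_of_disjoint h]
  rfl

theorem rank_fromCols_zero_left [Fintype n₁] [Fintype n₂] (Y : Matrix m n₂ K) :
    (fromCols (0 : Matrix m n₁ K) Y).rank = Y.rank := by
  rw [rank_fromCols_of_disjoint (by simp), rank_zero, zero_add]

theorem rank_fromCols_zero_right [Fintype n₁] [Fintype n₂] (X : Matrix m n₁ K) :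
    (fromCols X (0 : Matrix m n₂ K)).rank = X.rank := by
  rw [rank_fromCols_of_disjoint (by simp), rank_zero, add_zero]

variable [Fintype m₁] [Fintype m₂]

theorem rank_fromRows_zero_left [Fintype n] (Y : Matrix m₂ n K) :
    (fromRows (0 : Matrix m₁ n K) Y).rank = Y.rank := by
  rw [← rank_transpose, transpose_fromRows, transpose_zero, rank_fromCols_zero_left,
    rank_transpose]

theorem rank_fromRows_zero_right [Fintype n] (X : Matrix m₁ n K) :
    (fromRows X (0 : Matrix m₂ n K)).rank = X.rank := by
  rw [← rank_transpose, transpose_fromRows, transpose_zero, rank_fromCols_zero_right,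
    rank_transpose]

theorem rank_fromBlocks_zero_zero_s6 [Fintype n₁] [Fintype n₂] (B : Matrix m₁ n₁ K)
    (C : Matrix m₂ n₂ K) : (fromBlocks B 0 0 C).rank = B.rank + C.rank := by
  rw [← fromCols_fromRows_eq_fromBlocks, rank_fromCols_of_disjoint, rank_fromRows_zero_right,
    rank_fromRows_zero_left]
  refine disjoint_def.mpr ?_
  rintro _ ⟨u, rfl⟩ ⟨w, hw⟩
  ext (i | i)
  · simpa [fromRows_mulVec] using (congrFun hw (Sum.inl i)).symm
  · simp [fromRows_mulVec]

/-- `D - V * B * Z` is the generalized Schur complement of the pivot block `B`. -/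
theorem rank_fromBlocks_mul_mul [Fintype n₁] [Fintype n₂] (B : Matrix m₁ n₁ K)
    (Z : Matrix n₁ n₂ K) (V : Matrix m₂ m₁ K) (D : Matrix m₂ n₂ K) :
    (fromBlocks B (B * Z) (V * B) D).rank = B.rank + (D - V * B * Z).rank := by
  classical
  have hfactor : fromBlocks B (B * Z) (V * B) D =
      (fromBlocks 1 0 V 1 : Matrix (m₁ ⊕ m₂) (m₁ ⊕ m₂) K) *
        (fromBlocks B 0 0 (D - V * B * Z) : Matrix (m₁ ⊕ m₂) (n₁ ⊕ n₂) K) *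
        (fromBlocks 1 Z 0 1 : Matrix (n₁ ⊕ n₂) (n₁ ⊕ n₂) K) := by
    simp [fromBlocks_multiply, Matrix.mul_assoc]
  rw [hfactor, rank_mul_eq_left_of_isUnit_det _ _ (by simp),
    rank_mul_eq_right_of_isUnit_det _ _ (by simp),
    rank_fromBlocks_zero_zero_s6]

theorem rank_eq_rank_updateRow_zero_add_one [Fintype n] [DecidableEq m] (A : Matrix m n K)
    (i : m) (h : Pi.single i 1 ∈ LinearMap.range A.mulVecLin) :
    A.rank = (A.updateRow i 0).rank + 1 := by
  have hsplit (x : n → K) :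
      A *ᵥ x = A.updateRow i 0 *ᵥ x + (A *ᵥ x) i • Pi.single i 1 := by
    ext j
    by_cases hj : j = i <;> simp [updateRow_mulVec, hj]
  have hrange : LinearMap.range A.mulVecLin =
      LinearMap.range (A.updateRow i 0).mulVecLin ⊔ span K {Pi.single i 1} := by
    apply le_antisymm
    · rintro _ ⟨x, rfl⟩
      rw [mulVecLin_apply, hsplit]
      exact add_mem_sup ⟨x, rfl⟩ (mem_span_singleton.mpr ⟨_, rfl⟩)
    · refine sup_le ?_ ((span_singleton_le_iff_mem _ _).mpr h)
      rintro _ ⟨x, rfl⟩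
      rw [mulVecLin_apply, eq_sub_of_add_eq (hsplit x).symm]
      exact sub_mem ⟨x, rfl⟩ (smul_mem _ _ h)
  have hnot : Pi.single i 1 ∉ LinearMap.range (A.updateRow i 0).mulVecLin := by
    rintro ⟨x, hx⟩
    simpa [updateRow_mulVec] using congrFun hx i
  rw [rank, hrange, finrank_sup_of_disjoint (disjoint_span_singleton_of_notMem hnot),
    finrank_span_singleton (by simp)]
  rfl

end Matrix

section OneSeparation

variable {K : Type*} [Field K] {m₁ n₁ m₂ n₂ : Type*}
  (A11 : Matrix m₁ n₁ K) (A12 : Matrix m₁ (Fin 1) K) (A21 : Matrix (Fin 1) n₁ K) (a22 : K)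
  (A23 : Matrix (Fin 1) n₂ K) (A32 : Matrix m₂ (Fin 1) K) (A33 : Matrix m₂ n₂ K)

def oneSeparation : Matrix ((m₁ ⊕ Fin 1) ⊕ m₂) ((n₁ ⊕ Fin 1) ⊕ n₂) K :=
  fromBlocks (fromBlocks A11 A12 A21 (of fun _ _ => a22)) (fromRows 0 A23) (fromCols 0 A32) A33

theorem transpose_oneSeparation :
    (oneSeparation A11 A12 A21 a22 A23 A32 A33)ᵀ =
      oneSeparation A11ᵀ A21ᵀ A12ᵀ a22 A32ᵀ A23ᵀ A33ᵀ := by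
  ext ((i | i) | i) ((j | j) | j) <;> rfl

theorem oneSeparation_eq_fromCols :
    oneSeparation A11 A12 A21 a22 A23 A32 A33 =
      fromCols (fromCols (fromRows (fromRows A11 A21) 0)
        (fromRows (fromRows A12 (of fun _ _ => a22)) A32)) (fromRows (fromRows 0 A23) A33) := by
  ext ((i | i) | i) ((j | j) | j) <;> rfl

variable {A11 A12 A21 a22 A23 A32 A33} [Fintype m₁] [Fintype n₁] [Fintype m₂] [Fintype n₂]

theorem rank_oneSeparation_of_ker_le
    (hcol : (¬∃ z : n₁ → K, A11 * replicateCol (Fin 1) z = A12) ∨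
      ¬∃ z : n₂ → K, A33 * replicateCol (Fin 1) z = A32)
    (hker : LinearMap.ker A11.mulVecLin ≤ LinearMap.ker A21.mulVecLin ∨
      LinearMap.ker A33.mulVecLin ≤ LinearMap.ker A23.mulVecLin) :
    (oneSeparation A11 A12 A21 a22 A23 A32 A33).rank =
      (fromRows A11 A21).rank + (fromRows A23 A33).rank + 1 := by
  set C1 := fromRows (fromRows A11 A21) (0 : Matrix m₂ n₁ K)
  set G := fromRows (fromRows A12 (of fun _ _ => a22)) A32
  set C3 := fromRows (fromRows (0 : Matrix m₁ n₂ K) A23) A33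
  have hdisj : Disjoint (LinearMap.range C1.mulVecLin) (LinearMap.range C3.mulVecLin) := by
    rw [disjoint_def]
    rintro _ ⟨u, rfl⟩ ⟨w, hw⟩
    have h11 : A11 *ᵥ u = 0 := funext fun i => by
      simpa [C1, C3, fromRows_mulVec] using (congrFun hw (.inl (.inl i))).symm
    have h33 : A33 *ᵥ w = 0 := funext fun i => by
      simpa [C1, C3, fromRows_mulVec] using congrFun hw (.inr i)
    have hmid : A23 *ᵥ w = A21 *ᵥ u := funext fun i => by
      simpa [C1, C3, fromRows_mulVec] using congrFun hw (.inl (.inr i))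
    have h21 : A21 *ᵥ u = 0 := hker.elim (fun h => h h11) fun h => hmid ▸ h h33
    ext ((i | i) | i) <;> simp [C1, fromRows_mulVec, h11, h21]
  have hg : G.col 0 ∉ LinearMap.range C1.mulVecLin ⊔ LinearMap.range C3.mulVecLin := by
    intro hmem
    obtain ⟨_, ⟨u, rfl⟩, _, ⟨w, rfl⟩, huw⟩ := mem_sup.mp hmem
    rcases hcol with h1 | h3
    · refine h1 ⟨u, ?_⟩
      ext i j
      rw [Fin.fin_one_eq_zero j, ← replicateCol_mulVec, replicateCol_apply]
      simpa [C1, C3, G, fromRows_mulVec] using congrFun huw (.inl (.inl i))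
    · refine h3 ⟨w, ?_⟩
      ext i j
      rw [Fin.fin_one_eq_zero j, ← replicateCol_mulVec, replicateCol_apply]
      simpa [C1, C3, G, fromRows_mulVec] using congrFun huw (.inr i)
  have hC3 : C3.rank = (fromRows A23 A33).rank := by
    rw [show C3 = (fromRows 0 (fromRows A23 A33)).submatrix (Equiv.sumAssoc _ _ _) (Equiv.refl _)
      by ext ((i | i) | i) j <;> rfl, rank_submatrix, rank_fromRows_zero_left]
  calc (oneSeparation A11 A12 A21 a22 A23 A32 A33).rank
      = finrank K ↥(LinearMap.range C1.mulVecLin ⊔ span K {G.col 0} ⊔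
          LinearMap.range C3.mulVecLin) := by
        rw [oneSeparation_eq_fromCols, rank, range_mulVecLin_fromCols, range_mulVecLin_fromCols,
          range_mulVecLin G, Set.range_unique]
        rfl
    _ = C1.rank + C3.rank + 1 := by
        rw [sup_right_comm, finrank_sup_span_singleton hg, finrank_sup_of_disjoint hdisj]
        rfl
    _ = (fromRows A11 A21).rank + (fromRows A23 A33).rank + 1 := by
        rw [rank_fromRows_zero_right, hC3]

theorem rank_oneSeparation_of_ker_transpose_le
    (hrow : (¬∃ v : m₁ → K, replicateRow (Fin 1) v * A11 = A21) ∨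
      ¬∃ v : m₂ → K, replicateRow (Fin 1) v * A33 = A23)
    (hker : LinearMap.ker A11ᵀ.mulVecLin ≤ LinearMap.ker A12ᵀ.mulVecLin ∨
      LinearMap.ker A33ᵀ.mulVecLin ≤ LinearMap.ker A32ᵀ.mulVecLin) :
    (oneSeparation A11 A12 A21 a22 A23 A32 A33).rank =
      (fromCols A11 A12).rank + (fromCols A32 A33).rank + 1 := by
  have := rank_oneSeparation_of_ker_le (a22 := a22)
    (by simpa only [exists_replicateRow_mul_eq_iff] using hrow) hker
  rwa [← transpose_oneSeparation, rank_transpose, ← transpose_fromCols, ← transpose_fromCols,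
    rank_transpose, rank_transpose] at this

theorem rank_oneSeparation_of_not_ker_le
    (hcol : (¬∃ z : n₁ → K, A11 * replicateCol (Fin 1) z = A12) ∨
      ¬∃ z : n₂ → K, A33 * replicateCol (Fin 1) z = A32)
    (hker : ¬LinearMap.ker A11.mulVecLin ≤ LinearMap.ker A21.mulVecLin ∨
      ¬LinearMap.ker A33.mulVecLin ≤ LinearMap.ker A23.mulVecLin) :
    (oneSeparation A11 A12 A21 a22 A23 A32 A33).rank = A11.rank + A33.rank + 2 := by
  classical
  have hmid : Pi.single (.inl (.inr 0)) (1 : K) ∈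
      LinearMap.range (oneSeparation A11 A12 A21 a22 A23 A32 A33).mulVecLin := by
    rcases hker with h1 | h3
    · obtain ⟨u, hu, hu'⟩ := SetLike.not_le_iff_exists.mp h1
      rw [LinearMap.mem_ker, mulVecLin_apply] at hu hu'
      have hu0 : (A21 *ᵥ u) 0 ≠ 0 := fun h =>
        hu' (funext fun i => by rwa [Fin.fin_one_eq_zero i])
      refine ⟨((A21 *ᵥ u) 0)⁻¹ • Sum.elim (Sum.elim u 0) 0, ?_⟩
      ext ((i | i) | i)
      all_goals simp [oneSeparation, fromBlocks_mulVec, Fin.fin_one_eq_zero, hu, hu0]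
    · obtain ⟨w, hw, hw'⟩ := SetLike.not_le_iff_exists.mp h3
      rw [LinearMap.mem_ker, mulVecLin_apply] at hw hw'
      have hw0 : (A23 *ᵥ w) 0 ≠ 0 := fun h =>
        hw' (funext fun i => by rwa [Fin.fin_one_eq_zero i])
      refine ⟨((A23 *ᵥ w) 0)⁻¹ • Sum.elim (0 : n₁ ⊕ Fin 1 → K) w, ?_⟩
      ext ((i | i) | i)
      all_goals simp [oneSeparation, fromBlocks_mulVec, Fin.fin_one_eq_zero, hw, hw0]
  have hupdate : (oneSeparation A11 A12 A21 a22 A23 A32 A33).updateRow (.inl (.inr 0)) 0 =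
      oneSeparation A11 A12 0 0 0 A32 A33 := by
    ext ((i | i) | i) ((j | j) | j) <;> simp [oneSeparation, updateRow_apply, Fin.fin_one_eq_zero]
  rw [rank_eq_rank_updateRow_zero_add_one _ _ hmid, hupdate,
    rank_oneSeparation_of_ker_le (A21 := 0) (a22 := 0) (A23 := 0) hcol (Or.inl (by simp)),
    rank_fromRows_zero_right, rank_fromRows_zero_left]

theorem rank_oneSeparation_of_factor {z : n₁ → K} {v : m₁ → K}
    (hz : A11 * replicateCol (Fin 1) z = A12) (hv : replicateRow (Fin 1) v * A11 = A21) :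
    (oneSeparation A11 A12 A21 a22 A23 A32 A33).rank =
      (fromBlocks A11 A12 A21 (of fun _ _ => v ⬝ᵥ A11 *ᵥ z)).rank +
        (fromBlocks (of fun _ _ => a22 - v ⬝ᵥ A11 *ᵥ z) A23 A32 A33).rank := by
  classical
  have hpivot : replicateRow (Fin 1) v * A11 * replicateCol (Fin 1) z =
      of fun _ _ => v ⬝ᵥ A11 *ᵥ z := by
    rw [Matrix.mul_assoc, ← replicateCol_mulVec, replicateRow_mul_replicateCol]
  have hleft : (fromBlocks A11 A12 A21 (of fun _ _ => v ⬝ᵥ A11 *ᵥ z)).rank = A11.rank := by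
    rw [← hz, ← hv, ← hpivot, rank_fromBlocks_mul_mul, sub_self, rank_zero, add_zero]
  have hassoc : reindex (Equiv.sumAssoc _ _ _) (Equiv.sumAssoc _ _ _)
      (oneSeparation A11 A12 A21 a22 A23 A32 A33) =
      fromBlocks A11 (A11 * fromCols (replicateCol (Fin 1) z) 0)
        (fromRows (replicateRow (Fin 1) v) 0 * A11)
        (fromBlocks (of fun _ _ => a22) A23 A32 A33) := by
    rw [mul_fromCols, fromRows_mul, hz, hv, Matrix.mul_zero, Matrix.zero_mul]
    ext (i | i | i) (j | j | j) <;> rfl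
  have hschur : fromBlocks (of fun _ _ => a22) A23 A32 A33 -
      fromRows (replicateRow (Fin 1) v) 0 * A11 * fromCols (replicateCol (Fin 1) z) 0 =
      fromBlocks (of fun _ _ => a22 - v ⬝ᵥ A11 *ᵥ z) A23 A32 A33 := by
    rw [fromRows_mul, Matrix.zero_mul, fromRows_mul_fromCols, hpivot]
    ext (i | i) (j | j) <;> simp
  rw [← rank_reindex (Equiv.sumAssoc _ _ _) (Equiv.sumAssoc _ _ _), hassoc,
    rank_fromBlocks_mul_mul, hschur, hleft]

end OneSeparation

/-- Decomposition lemma: for a real matrix with a 1-separation, at least one of the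
four rank decompositions holds. -/
theorem rank_one_separation_cases (m1 n1 m2 n2 : ℕ)
    (A11 : Matrix (Fin m1) (Fin n1) ℝ) (A12 : Matrix (Fin m1) (Fin 1) ℝ)
    (A21 : Matrix (Fin 1) (Fin n1) ℝ) (a22 : ℝ)
    (A23 : Matrix (Fin 1) (Fin n2) ℝ) (A32 : Matrix (Fin m2) (Fin 1) ℝ)
    (A33 : Matrix (Fin m2) (Fin n2) ℝ) :
    (∃ (v : Fin m1 → ℝ) (z : Fin n1 → ℝ),
      (Matrix.fromBlocks
          (Matrix.fromBlocks A11 A12 A21 (Matrix.of fun (_ : Fin 1) (_ : Fin 1) => a22))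
          (Matrix.fromRows (0 : Matrix (Fin m1) (Fin n2) ℝ) A23)
          (Matrix.fromCols (0 : Matrix (Fin m2) (Fin n1) ℝ) A32) A33).rank =
        (Matrix.fromBlocks A11 A12 A21
            (Matrix.of fun (_ : Fin 1) (_ : Fin 1) =>
              dotProduct v (Matrix.mulVec A11 z))).rank +
          (Matrix.fromBlocks
            (Matrix.of fun (_ : Fin 1) (_ : Fin 1) =>
              a22 - dotProduct v (Matrix.mulVec A11 z))
            A23 A32 A33).rank) ∨
    (Matrix.fromBlocks
        (Matrix.fromBlocks A11 A12 A21 (Matrix.of fun (_ : Fin 1) (_ : Fin 1) => a22))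
        (Matrix.fromRows (0 : Matrix (Fin m1) (Fin n2) ℝ) A23)
        (Matrix.fromCols (0 : Matrix (Fin m2) (Fin n1) ℝ) A32) A33).rank =
      (Matrix.fromRows A11 A21).rank + (Matrix.fromRows A23 A33).rank + 1 ∨
    (Matrix.fromBlocks
        (Matrix.fromBlocks A11 A12 A21 (Matrix.of fun (_ : Fin 1) (_ : Fin 1) => a22))
        (Matrix.fromRows (0 : Matrix (Fin m1) (Fin n2) ℝ) A23)
        (Matrix.fromCols (0 : Matrix (Fin m2) (Fin n1) ℝ) A32) A33).rank =
      (Matrix.fromCols A11 A12).rank + (Matrix.fromCols A32 A33).rank + 1 ∨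
    (Matrix.fromBlocks
        (Matrix.fromBlocks A11 A12 A21 (Matrix.of fun (_ : Fin 1) (_ : Fin 1) => a22))
        (Matrix.fromRows (0 : Matrix (Fin m1) (Fin n2) ℝ) A23)
        (Matrix.fromCols (0 : Matrix (Fin m2) (Fin n1) ℝ) A32) A33).rank =
      A11.rank + A33.rank + 2 := by
  by_cases hfactor : (∃ z : Fin n1 → ℝ, A11 * replicateCol (Fin 1) z = A12) ∧
      ∃ v : Fin m1 → ℝ, replicateRow (Fin 1) v * A11 = A21
  · obtain ⟨⟨z, hz⟩, v, hv⟩ := hfactor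
    exact Or.inl ⟨v, z, rank_oneSeparation_of_factor hz hv⟩
  by_cases hcols : (∃ z : Fin n1 → ℝ, A11 * replicateCol (Fin 1) z = A12) ∧
      ∃ z : Fin n2 → ℝ, A33 * replicateCol (Fin 1) z = A32
  · obtain ⟨⟨z, hz⟩, -⟩ := hcols
    exact Or.inr <| Or.inr <| Or.inl <| rank_oneSeparation_of_ker_transpose_le
      (Or.inl fun hv => hfactor ⟨⟨z, hz⟩, hv⟩)
      (Or.inl (ker_mulVecLin_transpose_le_of_mul_eq hz))
  rw [not_and_or] at hcols
  by_cases hker : LinearMap.ker A11.mulVecLin ≤ LinearMap.ker A21.mulVecLin ∨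
      LinearMap.ker A33.mulVecLin ≤ LinearMap.ker A23.mulVecLin
  · exact Or.inr <| Or.inl <| rank_oneSeparation_of_ker_le hcols hker
  · exact Or.inr <| Or.inr <| Or.inr <| rank_oneSeparation_of_not_ker_le
      hcols (Or.inl (not_or.mp hker).1)
end

section
/- Let C = [[C11, C12, 0],[C21, c22, C23],[0, C32, C33]] be any real matrix with the 1-separation block structure. Then rank([C11; C21]) + rank([C23; C33]) + 1 ≥ rank(C), where [C11; C21] and [C23; C33] denote vertical concatenations. -/
/-!
Split the columns of `C` into its first `n1` columns, its middle column and its last `n2`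
columns. The first block is `[C11; C21]` padded with zero rows, the last is `[C23; C33]` padded
with zero rows, and padding by zero rows does not increase rank. Rank is subadditive under
concatenation of columns, and a single column has rank at most one.
-/

namespace Matrix

variable {K : Type*} [Field K] {m m₁ m₂ n n₁ n₂ : Type*}

theorem rank_fromCols_le [Fintype n₁] [Fintype n₂] (A : Matrix m n₁ K) (B : Matrix m n₂ K) :
    (fromCols A B).rank ≤ A.rank + B.rank := by
  have hrange : LinearMap.range (fromCols A B).mulVecLin ≤
      LinearMap.range A.mulVecLin ⊔ LinearMap.range B.mulVecLin := by
    rintro _ ⟨v, rfl⟩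
    rw [mulVecLin_apply, fromCols_mulVec]
    exact Submodule.add_mem_sup ⟨_, rfl⟩ ⟨_, rfl⟩
  exact (Submodule.finrank_mono hrange).trans (Submodule.finrank_add_le_finrank_add_finrank _ _)

variable [Fintype n]

theorem rank_fromRows_zero_right_le [Fintype m₁] (A : Matrix m₁ n K) :
    (fromRows A (0 : Matrix m₂ n K)).rank ≤ A.rank := by
  classical
  have : fromRows A (0 : Matrix m₂ n K) = fromRows (1 : Matrix m₁ m₁ K) 0 * A := by
    rw [fromRows_mul, Matrix.one_mul, Matrix.zero_mul]
  exact this ▸ rank_mul_le_right _ _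

theorem rank_fromRows_zero_left_le [Fintype m₂] (A : Matrix m₂ n K) :
    (fromRows (0 : Matrix m₁ n K) A).rank ≤ A.rank := by
  classical
  have : fromRows (0 : Matrix m₁ n K) A = fromRows 0 (1 : Matrix m₂ m₂ K) * A := by
    rw [fromRows_mul, Matrix.one_mul, Matrix.zero_mul]
  exact this ▸ rank_mul_le_right _ _

variable {R : Type*} [Zero R] {l₁ l₂ l₃ k₁ k₂ k₃ : Type*}

theorem fromBlocks_separation_eq_fromCols (A₁₁ : Matrix l₁ k₁ R) (A₁₂ : Matrix l₁ k₂ R)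
    (A₂₁ : Matrix l₂ k₁ R) (A₂₂ : Matrix l₂ k₂ R) (A₂₃ : Matrix l₂ k₃ R)
    (A₃₂ : Matrix l₃ k₂ R) (A₃₃ : Matrix l₃ k₃ R) :
    fromBlocks (fromBlocks A₁₁ A₁₂ A₂₁ A₂₂) (fromRows 0 A₂₃) (fromCols 0 A₃₂) A₃₃ =
      fromCols (fromCols (fromRows (fromRows A₁₁ A₂₁) 0) (fromRows (fromRows A₁₂ A₂₂) A₃₂))
        ((fromRows 0 (fromRows A₂₃ A₃₃)).submatrix (Equiv.sumAssoc _ _ _) (Equiv.refl _)) := by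
  ext ((i | i) | i) ((j | j) | j) <;> simp

end Matrix

open Matrix

/-- For any real matrix with the 1-separation block structure,
`rank [C11; C21] + rank [C23; C33] + 1 ≥ rank C`. -/
theorem rank_le_rows_blocks_add_one (m1 n1 m2 n2 : ℕ)
    (C11 : Matrix (Fin m1) (Fin n1) ℝ) (C12 : Matrix (Fin m1) (Fin 1) ℝ)
    (C21 : Matrix (Fin 1) (Fin n1) ℝ) (c22 : ℝ)
    (C23 : Matrix (Fin 1) (Fin n2) ℝ) (C32 : Matrix (Fin m2) (Fin 1) ℝ)
    (C33 : Matrix (Fin m2) (Fin n2) ℝ) :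
    (Matrix.fromBlocks
        (Matrix.fromBlocks C11 C12 C21 (Matrix.of fun (_ : Fin 1) (_ : Fin 1) => c22))
        (Matrix.fromRows (0 : Matrix (Fin m1) (Fin n2) ℝ) C23)
        (Matrix.fromCols (0 : Matrix (Fin m2) (Fin n1) ℝ) C32) C33).rank ≤
      (Matrix.fromRows C11 C21).rank + (Matrix.fromRows C23 C33).rank + 1 := by
  have hcol (u : Matrix ((Fin m1 ⊕ Fin 1) ⊕ Fin m2) (Fin 1) ℝ) : u.rank ≤ 1 := by
    simpa using u.rank_le_card_width
  rw [fromBlocks_separation_eq_fromCols]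
  grw [rank_fromCols_le, rank_fromCols_le, rank_fromRows_zero_right_le, hcol, rank_submatrix,
    rank_fromRows_zero_left_le]
  omega
end

section
/- Let C = [[C11, C12],[C21, c]] and D = [[d, C23],[C32, C33]] be real matrices, where c and d are scalars, C12 is a column and C21 is a row. For any real number e with sign(e) = sign(c + d) (i.e., e > 0 if c+d > 0, e < 0 if c+d < 0, e = 0 if c+d = 0), the matrix M = [[C11, C12, 0],[C21, c+d, C23],[0, C32, C33]] satisfies rank(M) ≤ rank(C) + rank(D). -/
/-! `M` is the sum of `C` and `D`, each padded with zeros so that their corner entries `c` and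
`d` land on the same position; padding by zeros preserves rank and rank is subadditive. -/

namespace Matrix

variable {K : Type*} [Field K] {m₁ m₂ n₁ n₂ k l : Type*}

theorem rank_add_le [Fintype n₁] (A B : Matrix m₁ n₁ K) : (A + B).rank ≤ A.rank + B.rank := by
  rw [rank, rank, rank, mulVecLin_add]
  calc Module.finrank K (LinearMap.range (A.mulVecLin + B.mulVecLin))
      ≤ Module.finrank K ↥(LinearMap.range A.mulVecLin ⊔ LinearMap.range B.mulVecLin) :=
        Submodule.finrank_mono (LinearMap.range_add_le _ _)
    _ ≤ _ := Submodule.finrank_add_le_finrank_add_finrank _ _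

theorem rank_fromBlocks_zero_zero_zero_s10 [Fintype m₁] [Fintype n₁] [Fintype n₂]
    [DecidableEq m₁] [DecidableEq n₁] (A : Matrix m₁ n₁ K) :
    (fromBlocks A 0 0 0 : Matrix (m₁ ⊕ m₂) (n₁ ⊕ n₂) K).rank = A.rank := by
  set M : Matrix (m₁ ⊕ m₂) (n₁ ⊕ n₂) K := fromBlocks A 0 0 0
  refine le_antisymm ?_ ?_
  · have hfactor : M = fromRows (1 : Matrix m₁ m₁ K) (0 : Matrix m₂ m₁ K) * A *
        fromCols (1 : Matrix n₁ n₁ K) (0 : Matrix n₁ n₂ K) := by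
      ext (i | i) (j | j) <;> simp [M, fromRows_mul, mul_fromCols]
    rw [hfactor]
    exact (rank_mul_le_left _ _).trans (rank_mul_le_right _ _)
  · have hcorner : M.submatrix Sum.inl Sum.inl = A := by
      ext; simp [M]
    exact hcorner ▸ rank_submatrix_le _ Sum.inl Sum.inl

theorem rank_fromBlocks_zero_zero_zero' [Fintype m₂] [Fintype n₁] [Fintype n₂]
    [DecidableEq m₂] [DecidableEq n₂] (D : Matrix m₂ n₂ K) :
    (fromBlocks 0 0 0 D : Matrix (m₁ ⊕ m₂) (n₁ ⊕ n₂) K).rank = D.rank := by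
  rw [← rank_fromBlocks_zero_zero_zero_s10 (m₂ := m₁) (n₂ := n₁) D,
    ← fromBlocks_submatrix_sum_swap_sum_swap]
  exact rank_submatrix _ (Equiv.sumComm _ _) (Equiv.sumComm _ _)

def subdirectSum {α : Type*} [Zero α] [Add α]
    (C : Matrix (m₁ ⊕ k) (n₁ ⊕ l) α) (D : Matrix (k ⊕ m₂) (l ⊕ n₂) α) :
    Matrix ((m₁ ⊕ k) ⊕ m₂) ((n₁ ⊕ l) ⊕ n₂) α :=
  fromBlocks C 0 0 0 +
    (fromBlocks 0 0 0 D).submatrix (Equiv.sumAssoc m₁ k m₂) (Equiv.sumAssoc n₁ l n₂)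

theorem rank_subdirectSum_le [Fintype m₁] [Fintype m₂] [Fintype k] [Fintype n₁] [Fintype n₂]
    [Fintype l] [DecidableEq m₁] [DecidableEq m₂] [DecidableEq k] [DecidableEq n₁]
    [DecidableEq n₂] [DecidableEq l]
    (C : Matrix (m₁ ⊕ k) (n₁ ⊕ l) K) (D : Matrix (k ⊕ m₂) (l ⊕ n₂) K) :
    (subdirectSum C D).rank ≤ C.rank + D.rank := by
  refine (rank_add_le _ _).trans_eq ?_
  rw [rank_fromBlocks_zero_zero_zero_s10, rank_submatrix, rank_fromBlocks_zero_zero_zero']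

end Matrix

theorem rank_one_subdirect_sum_le_general (m1 n1 m2 n2 : ℕ)
    (C11 : Matrix (Fin m1) (Fin n1) ℝ) (C12 : Matrix (Fin m1) (Fin 1) ℝ)
    (C21 : Matrix (Fin 1) (Fin n1) ℝ) (c d : ℝ)
    (C23 : Matrix (Fin 1) (Fin n2) ℝ) (C32 : Matrix (Fin m2) (Fin 1) ℝ)
    (C33 : Matrix (Fin m2) (Fin n2) ℝ) :
    (Matrix.fromBlocks
        (Matrix.fromBlocks C11 C12 C21 (Matrix.of fun (_ : Fin 1) (_ : Fin 1) => c + d))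
        (Matrix.fromRows (0 : Matrix (Fin m1) (Fin n2) ℝ) C23)
        (Matrix.fromCols (0 : Matrix (Fin m2) (Fin n1) ℝ) C32) C33).rank ≤
      (Matrix.fromBlocks C11 C12 C21 (Matrix.of fun (_ : Fin 1) (_ : Fin 1) => c)).rank +
        (Matrix.fromBlocks (Matrix.of fun (_ : Fin 1) (_ : Fin 1) => d) C23 C32 C33).rank := by
  refine (congrArg Matrix.rank ?_).trans_le (Matrix.rank_subdirectSum_le _ _)
  ext ((i | i) | i) ((j | j) | j) <;> simp [Matrix.subdirectSum]

/-- The 1-subdirect sum: for matrices `C = [[C11,C12],[C21,c]]` and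
`D = [[d,C23],[C32,C33]]` with overlapping `1×1` blocks, and any real `e` with the same
sign as `c + d`, the matrix `M` with middle entry `c + d` satisfies
`rank M ≤ rank C + rank D`. -/
theorem rank_one_subdirect_sum_le (m1 n1 m2 n2 : ℕ)
    (C11 : Matrix (Fin m1) (Fin n1) ℝ) (C12 : Matrix (Fin m1) (Fin 1) ℝ)
    (C21 : Matrix (Fin 1) (Fin n1) ℝ) (c d : ℝ)
    (C23 : Matrix (Fin 1) (Fin n2) ℝ) (C32 : Matrix (Fin m2) (Fin 1) ℝ)
    (C33 : Matrix (Fin m2) (Fin n2) ℝ) (e : ℝ)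
    (he_pos : 0 < c + d → 0 < e) (he_neg : c + d < 0 → e < 0)
    (he_zero : c + d = 0 → e = 0) :
    (Matrix.fromBlocks
        (Matrix.fromBlocks C11 C12 C21 (Matrix.of fun (_ : Fin 1) (_ : Fin 1) => c + d))
        (Matrix.fromRows (0 : Matrix (Fin m1) (Fin n2) ℝ) C23)
        (Matrix.fromCols (0 : Matrix (Fin m2) (Fin n1) ℝ) C32) C33).rank ≤
      (Matrix.fromBlocks C11 C12 C21 (Matrix.of fun (_ : Fin 1) (_ : Fin 1) => c)).rank +
        (Matrix.fromBlocks (Matrix.of fun (_ : Fin 1) (_ : Fin 1) => d) C23 C32 C33).rank :=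
  rank_one_subdirect_sum_le_general m1 n1 m2 n2 C11 C12 C21 c d C23 C32 C33
end
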